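/- Let n ≥ 2 and m ≤ n be positive integers, and let f be a vertex of the exponential graph K_m^{M(M(K_n))} such that for some p, q ∈ {0,1}, the map x ↦ f(x, p, q) is injective on [n] (i.e., a graph homomorphism from K_n to K_m). Then f has no neighbors in K_m^{M(M(K_n))}. -/

import Mathlib

/-- A finite graph in the sense of the paper: a symmetric adjacency relation,
loops are allowed. -/
structure SymGraph (V : Type) where
  Adj : V → V → Prop
  symm : ∀ {u v}, Adj u v → Adj v u

namespace Graph

variable {α β : Type}

/-- The complete graph `K_m` on vertex set `Fin m`. -/
def completeG (m : ℕ) : SymGraph (Fin m) :=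
  ⟨fun i j => i ≠ j, fun h => h.symm⟩

/-- `f` is a graph homomorphism from `G` to `H`. -/
def IsHom (G : SymGraph α) (H : SymGraph β) (f : α → β) : Prop :=
  ∀ ⦃u v⦄, G.Adj u v → H.Adj (f u) (f v)

/-- `G` admits a proper coloring with `n` colors. -/
def Colorable (G : SymGraph α) (n : ℕ) : Prop :=
  ∃ f : α → Fin n, IsHom G (completeG n) f

/-- The chromatic number of `G`, as an extended natural number. -/
noncomputable def chromNum (G : SymGraph α) : ℕ∞ :=
  sInf ((fun k : ℕ => (k : ℕ∞)) '' {k | Colorable G k})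

/-- The neighborhood of a vertex. -/
def neighborSet (G : SymGraph α) (v : α) : Set α := {w | G.Adj v w}

/-- The categorical product `G × H`. -/
def tensor (G : SymGraph α) (H : SymGraph β) : SymGraph (α × β) :=
  ⟨fun p q => G.Adj p.1 q.1 ∧ H.Adj p.2 q.2, fun h => ⟨G.symm h.1, H.symm h.2⟩⟩

/-- The exponential graph `K_m^G`: vertices are all set maps `V(G) → [m]`,
and `f` is adjacent to `g` iff `f u ≠ g v` for every edge `(u,v)` of `G`
(loops are allowed). -/
def expG (G : SymGraph α) (m : ℕ) : SymGraph (α → Fin m) :=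
  ⟨fun f g => ∀ u v, G.Adj u v → f u ≠ g v,
   fun {f g} h u v huv e => h v u (G.symm huv) e.symm⟩

/-- `G` is connected: nonempty and any two vertices are joined by a walk. -/
def Connected (G : SymGraph α) : Prop :=
  Nonempty α ∧ ∀ u v : α, Relation.ReflTransGen G.Adj u v

/-- Property `P` of the paper: `G` is simple, and for any two disjoint edges
`(v1,w1)` and `(v2,w2)`, if `(v2,v1)` is an edge then `(w2,v1)` or `(w2,w1)`
is an edge. -/
def PropertyP (G : SymGraph α) : Prop :=
  (∀ v, ¬ G.Adj v v) ∧
  ∀ ⦃v1 w1 v2 w2 : α⦄, G.Adj v1 w1 → G.Adj v2 w2 →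
    v1 ≠ v2 → v1 ≠ w2 → w1 ≠ v2 → w1 ≠ w2 →
    G.Adj v2 v1 → (G.Adj w2 v1 ∨ G.Adj w2 w1)

/-- Base (unsymmetrized) relation for the Mycielskian:
level-0 copies are adjacent as in `G`, a level-1 vertex is adjacent to the
level-0 copies of the neighbours of its shadow, and the apex `none` is
adjacent to all level-1 vertices. -/
def mycRel (G : SymGraph α) : Option (α × Bool) → Option (α × Bool) → Prop
  | some (a, false), some (b, false) => G.Adj a b
  | some (a, true), some (b, false) => G.Adj a b
  | none, some (_, true) => True
  | _, _ => False

/-- The Mycielskian `M(G)`. -/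
def myc (G : SymGraph α) : SymGraph (Option (α × Bool)) :=
  ⟨fun u v => mycRel G u v ∨ mycRel G v u, fun h => h.symm⟩

/-- The double Mycielskian `M(M(K_n))`. -/
def MMK (n : ℕ) : SymGraph (Option (Option (Fin n × Bool) × Bool)) :=
  myc (myc (completeG n))

/-- The vertex `(x, i, j)` of `M(M(K_n))`. -/
def vtx {n : ℕ} (x : Fin n) (i j : Bool) : Option (Option (Fin n × Bool) × Bool) :=
  some (some (x, i), j)

/-- The vertex `w_i = (*, i)` of `M(M(K_n))` for `i ∈ {0,1}`. -/
def wv (n : ℕ) (i : Bool) : Option (Option (Fin n × Bool) × Bool) :=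
  some (none, i)

/-- The apex vertex `w_2` of `M(M(K_n))`. -/
def w2 (n : ℕ) : Option (Option (Fin n × Bool) × Bool) := none

end Graph

/-!
Since `m ≤ n`, the injective layer `x ↦ f (x,p,q)` uses every colour. If `p = 1`, these vertices
are all adjacent to `w₀`, so a neighbour `g` of `f` has no colour left for `w₀`. If `p = 0`, the
vertex `(y,1,0)` is adjacent to every `(x,0,q)` with `x ≠ y`, which forces
`g (y,1,0) = f (y,0,q)`; then the layer `y ↦ g (y,1,0)` of `g` uses every colour and is adjacent
to `w₀`, so by the first case `g` has no neighbour, although `f` is one.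
-/

namespace Graph

section Exponential

variable {α ι : Type} {G : SymGraph α} {m : ℕ} {f g : α → Fin m}

theorem not_adj_expG_of_surjective (u : ι → α) (w : α) (hadj : ∀ i, G.Adj (u i) w)
    (hsurj : Function.Surjective (f ∘ u)) : ¬ (expG G m).Adj f g := by
  intro hfg
  obtain ⟨i, hi⟩ := hsurj (g w)
  exact hfg (u i) w (hadj i) hi

theorem neighborSet_expG_eq_empty_of_surjective (u : ι → α) (w : α)
    (hadj : ∀ i, G.Adj (u i) w) (hsurj : Function.Surjective (f ∘ u)) :
    neighborSet (expG G m) f = ∅ :=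
  Set.eq_empty_of_forall_notMem fun _ => not_adj_expG_of_surjective u w hadj hsurj

theorem expG_adj_apply_eq_of_surjective (hfg : (expG G m).Adj f g) (u v : ι → α)
    (hadj : ∀ i j, i ≠ j → G.Adj (u i) (v j)) (hsurj : Function.Surjective (f ∘ u)) (j : ι) :
    g (v j) = f (u j) := by
  obtain ⟨i, hi⟩ := hsurj (g (v j))
  obtain rfl : i = j := by_contra fun hij => hfg (u i) (v j) (hadj i j hij) hi
  exact hi.symm

end Exponential

section DoubleMycielskian

variable {n : ℕ}

theorem MMK_adj_vtx_true_wv_false (x : Fin n) (q : Bool) :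
    (MMK n).Adj (vtx x true q) (wv n false) := by
  cases q <;> simp [MMK, myc, mycRel, vtx, wv]

theorem MMK_adj_vtx_false_vtx_true {x y : Fin n} (hxy : x ≠ y) (q : Bool) :
    (MMK n).Adj (vtx x false q) (vtx y true false) := by
  cases q <;> simp [MMK, myc, mycRel, vtx, completeG, hxy.symm]

end DoubleMycielskian

theorem neighborSet_empty_of_injective_layer (n m : ℕ) (hmn : m ≤ n)
    (f : Option (Option (Fin n × Bool) × Bool) → Fin m) (p q : Bool)
    (hinj : Function.Injective fun x : Fin n => f (vtx x p q)) :
    neighborSet (expG (MMK n) m) f = ∅ := by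
  have hsurj : Function.Surjective fun x : Fin n => f (vtx x p q) :=
    (hinj.bijective_of_nat_card_le (by simpa using hmn)).surjective
  cases p with
  | true =>
    exact neighborSet_expG_eq_empty_of_surjective _ _ (MMK_adj_vtx_true_wv_false · q) hsurj
  | false =>
    refine Set.eq_empty_of_forall_notMem fun g hfg => ?_
    have hforced : (fun y => g (vtx y true false)) = fun y => f (vtx y false q) :=
      funext <| expG_adj_apply_eq_of_surjective hfg _ _
        (fun _ _ hxy => MMK_adj_vtx_false_vtx_true hxy q) hsurj
    have hsurj' : Function.Surjective fun y => g (vtx y true false) := hforced ▸ hsurj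
    exact not_adj_expG_of_surjective _ _ (MMK_adj_vtx_true_wv_false · false) hsurj'
      ((expG (MMK n) m).symm hfg)

end Graph
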